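/- arXiv:2201.04595 — 5 statements merged into one kernel-verified Lean document; each statement's English description precedes it below -/
import Mathlib

section
/- Let n, d ≥ 1 and t ≥ 0 be integers, let u, v ∈ M_{n,d,t} with u ≥_slex v (for t = 0 the order is ≥_lex), and set J = (L^i_t(v)) and T = (L^f_t(u)) in S = K[x_1,…,x_n]. Then the ideal Q = J ∩ T is generated in degrees d and d+1; that is, Q is generated by its homogeneous elements of degrees d and d+1. -/
open MvPolynomial

/-- A degree-`d` `t`-spread monomial of `K[x_1,…,x_n]`, recorded by its weakly increasing
(1-based) sequence of variable indices `idx 0 ≤ idx 1 ≤ ⋯` with consecutive gaps at least `t`.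
For `t ≥ 1` these are exactly the `t`-spread monomials `x_{i_1}⋯x_{i_d}` with
`i_{j+1} - i_j ≥ t`, and for `t = 0` all monomials of degree `d` (written with sorted indices). -/
structure SpreadMono (n d t : ℕ) where
  idx : Fin d → ℕ
  one_le : ∀ j, 1 ≤ idx j
  le_n : ∀ j, idx j ≤ n
  spread : ∀ (j : Fin d) (h : (j : ℕ) + 1 < d), idx j + t ≤ idx ⟨(j : ℕ) + 1, h⟩

namespace SpreadMono

variable {n d t : ℕ}

/-- The (0-based) variable of `Fin n` corresponding to the `j`-th (1-based) index. -/
def var (u : SpreadMono n d t) (j : Fin d) : Fin n :=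
  ⟨u.idx j - 1, by have h1 := u.one_le j; have h2 := u.le_n j; omega⟩

/-- The exponent vector of the monomial `x_{i_1}⋯x_{i_d}`. -/
noncomputable def expVec (u : SpreadMono n d t) : Fin n →₀ ℕ :=
  ∑ j, Finsupp.single (u.var j) 1

/-- The monomial `x_{i_1}⋯x_{i_d}` as an element of `MvPolynomial (Fin n) K`. -/
noncomputable def toMvPoly (K : Type*) [Field K] (u : SpreadMono n d t) :
    MvPolynomial (Fin n) K :=
  MvPolynomial.monomial u.expVec 1

/-- Strict lexicographic order on index sequences. -/
def seqLT (f g : Fin d → ℕ) : Prop :=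
  ∃ s : Fin d, (∀ j, j < s → f j = g j) ∧ f s < g s

/-- Lexicographic order (≤) on index sequences. -/
def seqLE (f g : Fin d → ℕ) : Prop := f = g ∨ seqLT f g

/-- `u ≥_slex v`: a monomial is `slex`-larger iff its index sequence is lex-smaller. -/
def slexGE (u v : SpreadMono n d t) : Prop := seqLE u.idx v.idx

/-- `u >_slex v`. -/
def slexGT (u v : SpreadMono n d t) : Prop := seqLT u.idx v.idx

/-- The `t`-spread lexsegment `L_t(u,v) = {w : u ≥_slex w ≥_slex v}`. -/
def lexseg (u v : SpreadMono n d t) : Set (SpreadMono n d t) :=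
  {w | slexGE u w ∧ slexGE w v}

/-- The initial `t`-spread lexsegment `L^i_t(v) = {w : w ≥_slex v}`. -/
def initialSeg (v : SpreadMono n d t) : Set (SpreadMono n d t) :=
  {w | slexGE w v}

/-- The final `t`-spread lexsegment `L^f_t(u) = {w : w ≤_slex u}`. -/
def finalSeg (u : SpreadMono n d t) : Set (SpreadMono n d t) :=
  {w | slexGE u w}

/-- The ideal of `MvPolynomial (Fin n) K` generated by a set of spread monomials. -/
noncomputable def idealOf (K : Type*) [Field K] (A : Set (SpreadMono n d t)) :
    Ideal (MvPolynomial (Fin n) K) :=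
  Ideal.span ((fun w => toMvPoly K w) '' A)

end SpreadMono

namespace SpreadMono

variable {n d t : ℕ}

/-! ### order lemmas -/

lemma seqLT_trans {f g h : Fin d → ℕ} (h1 : seqLT f g) (h2 : seqLT g h) : seqLT f h := by
  obtain ⟨s1, e1, l1⟩ := h1
  obtain ⟨s2, e2, l2⟩ := h2
  rcases lt_trichotomy s1 s2 with hs | hs | hs
  · exact ⟨s1, fun j hj => (e1 j hj).trans (e2 j (hj.trans hs)), l1.trans_le (e2 s1 hs).le⟩
  · exact ⟨s1, fun j hj => (e1 j hj).trans (e2 j (hs ▸ hj)), l1.trans (hs ▸ l2)⟩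
  · exact ⟨s2, fun j hj => (e1 j (hj.trans hs)).trans (e2 j hj), (e1 s2 hs) ▸ l2⟩

lemma seqLT_irrefl {f : Fin d → ℕ} (h : seqLT f f) : False := by
  obtain ⟨s, _, l⟩ := h; exact lt_irrefl _ l

lemma seqLE_trans {f g h : Fin d → ℕ} (h1 : seqLE f g) (h2 : seqLE g h) : seqLE f h := by
  rcases h1 with rfl | h1
  · exact h2
  rcases h2 with rfl | h2
  · exact Or.inr h1
  exact Or.inr (seqLT_trans h1 h2)

lemma seqLE_seqLT_trans {f g h : Fin d → ℕ} (h1 : seqLE f g) (h2 : seqLT g h) : seqLT f h := by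
  rcases h1 with rfl | h1
  · exact h2
  exact seqLT_trans h1 h2

lemma seqLT_seqLE_trans {f g h : Fin d → ℕ} (h1 : seqLT f g) (h2 : seqLE g h) : seqLT f h := by
  rcases h2 with rfl | h2
  · exact h1
  exact seqLT_trans h1 h2

lemma seqLT_of_not_seqLE {f g : Fin d → ℕ} (h : ¬ seqLE f g) : seqLT g f := by
  classical
  have hfg : f ≠ g := fun he => h (Or.inl he)
  have hne : (Finset.univ.filter (fun j => f j ≠ g j)).Nonempty := by
    obtain ⟨j, hj⟩ := Function.ne_iff.mp hfg
    exact ⟨j, by simpa using hj⟩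
  set s := (Finset.univ.filter (fun j => f j ≠ g j)).min' hne with hs
  have hsmem : f s ≠ g s := by
    have := (Finset.univ.filter (fun j => f j ≠ g j)).min'_mem hne
    exact (Finset.mem_filter.mp this).2
  have hpre : ∀ j, j < s → f j = g j := by
    intro j hj
    by_contra hc
    have := (Finset.univ.filter (fun j => f j ≠ g j)).min'_le j (by simpa using hc)
    exact absurd (lt_of_lt_of_le hj this) (lt_irrefl _)
  rcases lt_or_gt_of_ne hsmem with hl | hl
  · exact absurd (Or.inr ⟨s, hpre, hl⟩) h
  · exact ⟨s, fun j hj => (hpre j hj).symm, hl⟩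

/-! ### expVec lemmas -/

lemma var_eq_iff (u w : SpreadMono n d t) (j k : Fin d) :
    u.var j = w.var k ↔ u.idx j = w.idx k := by
  have h1 := u.one_le j; have h2 := w.one_le k
  rw [var, var, Fin.mk_eq_mk]
  omega

lemma idx_mono (w : SpreadMono n d t) : ∀ (m : ℕ) (j k : Fin d), (k : ℕ) = j + m →
    w.idx j ≤ w.idx k := by
  intro m
  induction m with
  | zero => intro j k h; have : j = k := Fin.ext (by omega); rw [this]
  | succ m ih =>
    intro j k h
    have hj1 : (j : ℕ) + 1 < d := by have := k.isLt; omega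
    have h1 := w.spread j hj1
    exact le_trans (by omega) (ih ⟨(j : ℕ) + 1, hj1⟩ k (by simp; omega))

lemma idx_mono' (w : SpreadMono n d t) {j k : Fin d} (h : j ≤ k) : w.idx j ≤ w.idx k :=
  idx_mono w ((k : ℕ) - (j : ℕ)) j k (by omega)

lemma expVec_apply (w : SpreadMono n d t) (g : Fin n) :
    w.expVec g = (Finset.univ.filter (fun j => w.var j = g)).card := by
  classical
  rw [expVec, Finset.sum_apply']
  simp only [Finsupp.single_apply]
  exact (Finset.card_filter _ _).symm

lemma expVec_degree (w : SpreadMono n d t) : w.expVec.degree = d := by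
  classical
  rw [expVec, Finsupp.degree_eq_weight_one, map_sum]
  simp [Finsupp.weight_apply, Finsupp.sum_single_index]

/-- the counting lemma: if `w` and `w'` agree before `s` and `w.idx s < w'.idx s`, then
`w` has strictly more variables equal to `x_{w.idx s}` than `w'`. -/
lemma count_lt (w w' : SpreadMono n d t) (s : Fin d)
    (hpre : ∀ j, j < s → w.idx j = w'.idx j) (hlt : w.idx s < w'.idx s) :
    w'.expVec (w.var s) < w.expVec (w.var s) := by
  classical
  rw [expVec_apply, expVec_apply]
  set Sb := Finset.univ.filter (fun j => w'.var j = w.var s) with hSb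
  set Sa := Finset.univ.filter (fun j => w.var j = w.var s) with hSa
  have hsub : Sb ⊆ Sa.erase s := by
    intro j hj
    have hj' : w'.idx j = w.idx s := (var_eq_iff _ _ _ _).mp (Finset.mem_filter.mp hj).2
    have hjs : j < s := by
      by_contra hc
      have : w'.idx s ≤ w'.idx j := idx_mono' w' (not_lt.mp hc)
      omega
    refine Finset.mem_erase.mpr ⟨hjs.ne, Finset.mem_filter.mpr ⟨Finset.mem_univ _, ?_⟩⟩
    rw [var_eq_iff]
    rw [hpre j hjs]; exact hj'
  have hsa : s ∈ Sa := Finset.mem_filter.mpr ⟨Finset.mem_univ _, rfl⟩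
  calc Sb.card ≤ (Sa.erase s).card := Finset.card_le_card hsub
    _ < Sa.card := Finset.card_erase_lt_of_mem hsa

/-! ### the swap construction -/

/-- Replace the `s`-th index of `w'` by the (smaller) `s`-th index of `w`. -/
def swap (w w' : SpreadMono n d t) (s : Fin d)
    (hpre : ∀ j, j < s → w.idx j = w'.idx j) (hlt : w.idx s < w'.idx s) :
    SpreadMono n d t where
  idx := Function.update w'.idx s (w.idx s)
  one_le := by
    intro j
    rcases eq_or_ne j s with rfl | hj
    · simp [w.one_le j]
    · simp [Function.update_of_ne hj, w'.one_le j]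
  le_n := by
    intro j
    rcases eq_or_ne j s with rfl | hj
    · simp [w.le_n j]
    · simp [Function.update_of_ne hj, w'.le_n j]
  spread := by
    intro j hj
    rcases eq_or_ne j s with rfl | hjs
    · have h1 : (⟨(j : ℕ) + 1, hj⟩ : Fin d) ≠ j := by simp [Fin.ext_iff]
      rw [Function.update_self, Function.update_of_ne h1]
      have h2 := w'.spread j hj
      omega
    · rw [Function.update_of_ne hjs]
      rcases eq_or_ne (⟨(j : ℕ) + 1, hj⟩ : Fin d) s with hj1s | hj1s
      · rw [hj1s, Function.update_self]
        have hjlt : j < s := by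
          rw [← hj1s]; exact Fin.lt_def.mpr (by simp)
        have h2 := w.spread j hj
        have h3 : w.idx j = w'.idx j := hpre j hjlt
        have h4 : w.idx (⟨(j : ℕ) + 1, hj⟩ : Fin d) = w.idx s := congrArg w.idx hj1s
        omega
      · rw [Function.update_of_ne hj1s]
        exact w'.spread j hj


lemma degree_add {m : ℕ} (a b : Fin m →₀ ℕ) : (a + b).degree = a.degree + b.degree := by
  rw [Finsupp.degree_eq_weight_one, map_add]

lemma degree_single {m : ℕ} (g : Fin m) : (Finsupp.single g 1).degree = 1 := by
  rw [Finsupp.degree_eq_weight_one]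
  simp [Finsupp.weight_apply, Finsupp.sum_single_index]

section SwapLemmas

variable (w w' : SpreadMono n d t) (s : Fin d)
  (hpre : ∀ j, j < s → w.idx j = w'.idx j) (hlt : w.idx s < w'.idx s)

lemma swap_var_ne {j : Fin d} (hj : j ≠ s) :
    (swap w w' s hpre hlt).var j = w'.var j := by
  rw [var_eq_iff]
  show Function.update w'.idx s (w.idx s) j = w'.idx j
  rw [Function.update_of_ne hj]

lemma swap_var_eq : (swap w w' s hpre hlt).var s = w.var s := by
  rw [var_eq_iff]
  show Function.update w'.idx s (w.idx s) s = w.idx s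
  rw [Function.update_self]

lemma swap_expVec :
    (swap w w' s hpre hlt).expVec + Finsupp.single (w'.var s) 1 =
      w'.expVec + Finsupp.single (w.var s) 1 := by
  classical
  rw [expVec, expVec, ← Finset.sum_erase_add _ _ (Finset.mem_univ s),
    ← Finset.sum_erase_add _ _ (Finset.mem_univ s)]
  rw [Finset.sum_congr rfl (fun j hj => by
    rw [swap_var_ne w w' s hpre hlt (Finset.mem_erase.mp hj).1]),
    swap_var_eq w w' s hpre hlt]
  abel

lemma swap_expVec_le :
    (swap w w' s hpre hlt).expVec ≤ w'.expVec + Finsupp.single (w.var s) 1 := by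
  rw [← swap_expVec w w' s hpre hlt]
  exact self_le_add_right _ _

lemma swap_sum_lt : (∑ j, (swap w w' s hpre hlt).idx j) < ∑ j, w'.idx j := by
  classical
  show (∑ j, Function.update w'.idx s (w.idx s) j) < _
  rw [Finset.sum_update_of_mem (Finset.mem_univ s), Finset.sdiff_singleton_eq_erase,
    ← Finset.add_sum_erase _ _ (Finset.mem_univ s)]
  omega

lemma swap_seqLT_left : seqLT (swap w w' s hpre hlt).idx w'.idx := by
  refine ⟨s, fun j hj => ?_, ?_⟩
  · show Function.update w'.idx s (w.idx s) j = w'.idx j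
    rw [Function.update_of_ne hj.ne]
  · show Function.update w'.idx s (w.idx s) s < w'.idx s
    rw [Function.update_self]; exact hlt

end SwapLemmas

lemma single_le_of_lt {m : ℕ} (a b : Fin m →₀ ℕ) (g : Fin m) (h : b g < a g) (x : Fin m) :
    (b + Finsupp.single g (1 : ℕ)) x ≤ max (a x) (b x) := by
  rcases eq_or_ne x g with rfl | hx
  · rw [Finsupp.add_apply, Finsupp.single_apply, if_pos rfl]
    exact le_max_iff.mpr (Or.inl (by omega))
  · rw [Finsupp.add_apply, Finsupp.single_apply, if_neg (Ne.symm hx), add_zero]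
    exact le_max_right _ _

/-- The key combinatorial lemma. -/
lemma key (hd : 1 ≤ d) (u v : SpreadMono n d t) (huv : seqLE u.idx v.idx) :
    ∀ (N : ℕ) (w w' : SpreadMono n d t), (∑ j, w'.idx j) ≤ N →
      seqLE w.idx v.idx → seqLE u.idx w'.idx →
      ∃ (W : Fin n →₀ ℕ) (y z : SpreadMono n d t),
        seqLE y.idx v.idx ∧ seqLE u.idx z.idx ∧
        y.expVec ≤ W ∧ z.expVec ≤ W ∧
        (∀ g, W g ≤ max (w.expVec g) (w'.expVec g)) ∧
        (W.degree = d ∨ W.degree = d + 1) := by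
  intro N
  induction N with
  | zero =>
    intro w w' hsum _ _
    exfalso
    have h1 := w'.one_le ⟨0, hd⟩
    have h2 : w'.idx ⟨0, hd⟩ ≤ ∑ j, w'.idx j :=
      Finset.single_le_sum (fun i _ => Nat.zero_le _) (Finset.mem_univ _)
    omega
  | succ N ih =>
    intro w w' hsum hw hw'
    by_cases hc1 : seqLE w'.idx v.idx
    · exact ⟨w'.expVec, w', w', hc1, hw', le_refl _, le_refl _,
        fun g => le_max_right _ _, Or.inl (expVec_degree w')⟩
    by_cases hc2 : seqLE u.idx w.idx
    · exact ⟨w.expVec, w, w, hw, hc2, le_refl _, le_refl _,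
        fun g => le_max_left _ _, Or.inl (expVec_degree w)⟩
    have hvw' : seqLT v.idx w'.idx := seqLT_of_not_seqLE hc1
    have hwu : seqLT w.idx u.idx := seqLT_of_not_seqLE hc2
    have hww' : seqLT w.idx w'.idx :=
      seqLT_trans (seqLT_seqLE_trans hwu huv) hvw'
    obtain ⟨s, hpre, hlt⟩ := hww'
    set c := swap w w' s hpre hlt with hc
    have hcount := count_lt w w' s hpre hlt
    set W0 := w'.expVec + Finsupp.single (w.var s) 1 with hW0
    have hW0max : ∀ g, W0 g ≤ max (w.expVec g) (w'.expVec g) :=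
      single_le_of_lt w.expVec w'.expVec (w.var s) hcount
    have hcW0 : c.expVec ≤ W0 := swap_expVec_le w w' s hpre hlt
    have hw'W0 : w'.expVec ≤ W0 := self_le_add_right _ _
    have hW0deg : W0.degree = d + 1 := by
      rw [hW0, degree_add, expVec_degree, degree_single]
    by_cases hc3 : seqLE c.idx v.idx
    · exact ⟨W0, c, w', hc3, hw', hcW0, hw'W0, hW0max, Or.inr hW0deg⟩
    · have hvc : seqLT v.idx c.idx := seqLT_of_not_seqLE hc3
      have huc : seqLE u.idx c.idx := seqLE_trans huv (Or.inr hvc)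
      have hsum' : (∑ j, c.idx j) ≤ N := by
        have hlt2 := swap_sum_lt w w' s hpre hlt
        rw [← hc] at hlt2
        omega
      obtain ⟨W, y, z, h1, h2, h3, h4, h5, h6⟩ := ih w c hsum' hw huc
      refine ⟨W, y, z, h1, h2, h3, h4, fun g => ?_, h6⟩
      have ha := h5 g
      have hb := hW0max g
      have hcc : c.expVec g ≤ W0 g := hcW0 g
      simp only [le_max_iff] at *
      omega

end SpreadMono


/-- `a ≤_lex b` for exponent vectors of monomials of `K[x_1,…,x_m]`, for the lexicographic
order with `x_1 > x_2 > ⋯ > x_m`: either `a = b`, or at the first position where they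
differ `b` has the larger exponent. -/
def monoLE {m : ℕ} (a b : Fin m →₀ ℕ) : Prop :=
  a = b ∨ ∃ i : Fin m, (∀ j, j < i → a j = b j) ∧ a i < b i

open SpreadMono

/-- **Proposition.** For `n,d ≥ 1`, `t ≥ 0` and `u ≥_slex v` in `M_{n,d,t}`, the ideal
`Q = (L^i_t(v)) ∩ (L^f_t(u))` is generated in degrees `d` and `d+1`, i.e. it is
generated by its homogeneous elements of degrees `d` and `d+1`. -/
theorem stmt1 {K : Type*} [Field K] (n d t : ℕ) (hn : 1 ≤ n) (hd : 1 ≤ d)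
    (u v : SpreadMono n d t) (huv : slexGE u v) :
    idealOf K (initialSeg v) ⊓ idealOf K (finalSeg u) =
      Ideal.span {q : MvPolynomial (Fin n) K |
        q ∈ idealOf K (initialSeg v) ⊓ idealOf K (finalSeg u) ∧
          (q.IsHomogeneous d ∨ q.IsHomogeneous (d + 1))} := by

  classical
  have himg : ∀ A : Set (SpreadMono n d t),
      (fun w => toMvPoly K w) '' A = (fun e => monomial e (1 : K)) '' (expVec '' A) := by
    intro A
    rw [Set.image_image]
    rfl
  apply le_antisymm
  · intro p hp
    obtain ⟨hpJ, hpT⟩ := Submodule.mem_inf.mp hp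
    rw [idealOf, himg, mem_ideal_span_monomial_image] at hpJ hpT
    rw [← p.support_sum_monomial_coeff]
    apply Ideal.sum_mem
    intro m hm
    have hCm : monomial m (coeff m p) = C (coeff m p) * monomial m 1 := by
      rw [C_mul_monomial, mul_one]
    rw [hCm]
    apply Ideal.mul_mem_left
    obtain ⟨_, ⟨w, hwmem, rfl⟩, hwle⟩ := hpJ m hm
    obtain ⟨_, ⟨w', hw'mem, rfl⟩, hw'le⟩ := hpT m hm
    obtain ⟨W, y, z, hy, hz, hyW, hzW, hWmax, hWdeg⟩ :=
      key hd u v huv (∑ j, w'.idx j) w w' le_rfl hwmem hw'mem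
    have hWm : W ≤ m := by
      rw [Finsupp.le_def]
      intro g
      have h1 := hWmax g
      have h2 := Finsupp.le_def.mp hwle g
      have h3 := Finsupp.le_def.mp hw'le g
      simp only [le_max_iff] at h1
      omega
    have hWQ : (monomial W (1 : K)) ∈
        idealOf K (initialSeg v) ⊓ idealOf K (finalSeg u) := by
      have hsup : ∀ xi ∈ (monomial W (1 : K)).support, xi = W := by
        intro xi hxi
        simpa [support_monomial] using hxi
      refine Submodule.mem_inf.mpr ⟨?_, ?_⟩
      · rw [idealOf, himg, mem_ideal_span_monomial_image]
        intro xi hxi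
        exact ⟨y.expVec, ⟨y, hy, rfl⟩, (hsup xi hxi) ▸ hyW⟩
      · rw [idealOf, himg, mem_ideal_span_monomial_image]
        intro xi hxi
        exact ⟨z.expVec, ⟨z, hz, rfl⟩, (hsup xi hxi) ▸ hzW⟩
    have hhom : (monomial W (1 : K)).IsHomogeneous d ∨
        (monomial W (1 : K)).IsHomogeneous (d + 1) := by
      rcases hWdeg with h | h
      · exact Or.inl (isHomogeneous_monomial _ h)
      · exact Or.inr (isHomogeneous_monomial _ h)
    have hsplit : monomial m (1 : K) = monomial (m - W) 1 * monomial W 1 := by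
      rw [monomial_mul, one_mul, tsub_add_cancel_of_le hWm]
    rw [hsplit]
    exact Ideal.mul_mem_left _ _ (Ideal.subset_span ⟨hWQ, hhom⟩)
  · rw [Ideal.span_le]
    intro q hq
    exact hq.1
end

section
/- Let n, t ≥ 1 and let u = x_{i_1}x_{i_2}⋯x_{i_d} ∈ M_{n,d,t} with i_1 < i_2 < ⋯ < i_d. If Gap_t(u) = ∅, then u = x_{n−(d−1)t}⋯x_{n−t}x_n is the smallest element of M_{n,d,t} with respect to >_slex. Otherwise, setting p = max(Gap_t(u)), the largest element v of M_{n,d,t} with v <_slex u is v = x_{i_1}⋯x_{i_{p−1}}·x_{i_p+1}·x_{i_p+1+t}·x_{i_p+1+2t}⋯x_{i_p+1+(d−p)t} (for p = d this reads v = x_{i_1}⋯x_{i_{d−1}}·x_{i_d+1}). -/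
/-!
Let `u = x_{i_1}⋯x_{i_d}` be `t`-spread. Every `t`-spread `w` satisfies `w_j + (d - j) t ≤ n`
at each position `j`, and if `u` has no gap at any position from `j` on, this bound is attained:
`i_j + (d - j) t = n`. So a gapless `u` is pointwise maximal, hence `slex`-smallest. In general,
if `w <_slex u` first differs from `u` at position `s`, then `w_s > i_s`, which forces `s` to be
at most the last gap `p`. If `s < p` then `v <_slex w` already at `s`; if `s = p` then `w` is
pointwise at least `v`, since `v` keeps `i_1, …, i_{p-1}` and from `p` on is the smallest
`t`-spread continuation of `i_p + 1`.
-/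

open MvPolynomial

open SpreadMono

/-- `u` has a `j`-gap_t (0-based position `j`, i.e. position `j+1` in 1-based notation),
with the convention `i_{d+1} := n + t`. -/
def hasGap (n t : ℕ) {d : ℕ} (f : Fin d → ℕ) (j : Fin d) : Prop :=
  if h : (j : ℕ) + 1 < d then t < f ⟨(j : ℕ) + 1, h⟩ - f j else t < n + t - f j

namespace SpreadMono

variable {n d t : ℕ}

lemma seqLE_of_forall_le {f g : Fin d → ℕ} (h : ∀ j, f j ≤ g j) : seqLE f g :=
  (le_iff_eq_or_lt.mp (Pi.toLex_monotone h)).imp (fun h => toLex.injective h) id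

lemma hasGap_iff_of_lt {f : Fin d → ℕ} {j : Fin d} (hj : (j : ℕ) + 1 < d) :
    hasGap n t f j ↔ f j + t < f ⟨j + 1, hj⟩ := by
  rw [hasGap, dif_pos hj]
  omega

lemma hasGap_iff_of_not_lt {f : Fin d → ℕ} {j : Fin d} (hj : ¬ (j : ℕ) + 1 < d) :
    hasGap n t f j ↔ f j < n := by
  rw [hasGap, dif_neg hj]
  omega

lemma add_mul_le_idx (w : SpreadMono n d t) {a b : Fin d} (hab : a ≤ b) :
    w.idx a + ((b : ℕ) - a) * t ≤ w.idx b := by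
  obtain ⟨b, hb⟩ := b
  induction b with
  | zero =>
    obtain rfl : a = ⟨0, hb⟩ := Fin.ext (Nat.le_zero.mp hab)
    simp
  | succ b ih =>
    rcases hab.eq_or_lt with rfl | hlt
    · simp
    · have hab : (a : ℕ) ≤ b := Nat.lt_succ_iff.mp hlt
      have hprev := ih (by omega) hab
      have hstep := w.spread ⟨b, by omega⟩ hb
      have hmul : (b + 1 - a) * t = (b - a) * t + t := by
        rw [show b + 1 - a = b - a + 1 by omega, add_one_mul]
      simp only at hprev hstep ⊢
      omega

lemma idx_add_mul_le (w : SpreadMono n d t) (j : Fin d) : w.idx j + (d - 1 - j) * t ≤ n := by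
  have hj := j.isLt
  have hchain := w.add_mul_le_idx (a := j) (b := ⟨d - 1, by omega⟩) (Nat.le_sub_one_of_lt hj)
  have hlast := w.le_n ⟨d - 1, by omega⟩
  simp only at hchain
  omega

lemma idx_add_mul_eq_of_forall_not_hasGap (u : SpreadMono n d t) {j : Fin d}
    (h : ∀ q, j ≤ q → ¬ hasGap n t u.idx q) : u.idx j + (d - 1 - j) * t = n := by
  suffices ∀ k (j : Fin d), d - 1 - j = k → (∀ q, j ≤ q → ¬ hasGap n t u.idx q) →
      u.idx j + k * t = n from this _ j rfl h
  intro k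
  induction k with
  | zero =>
    intro j hk h
    have := (hasGap_iff_of_not_lt (by omega)).not.mp (h j le_rfl)
    have := u.le_n j
    simp only [zero_mul, add_zero]
    omega
  | succ k ih =>
    intro j hk h
    have hj : (j : ℕ) + 1 < d := by omega
    have htight := (hasGap_iff_of_lt hj).not.mp (h j le_rfl)
    have hspread := u.spread j hj
    have hnext := ih ⟨j + 1, hj⟩ (by simp only; omega)
      fun q hq => h q (le_trans (Fin.le_def.mpr (by simp)) hq)
    rw [add_one_mul]
    omega

lemma idx_add_one_add_mul_le_of_hasGap (u : SpreadMono n d t) {p : Fin d}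
    (hp : hasGap n t u.idx p) (hmax : ∀ q, hasGap n t u.idx q → q ≤ p) :
    u.idx p + 1 + (d - 1 - p) * t ≤ n := by
  by_cases hp1 : (p : ℕ) + 1 < d
  · have hgap := (hasGap_iff_of_lt hp1).mp hp
    have htail := u.idx_add_mul_eq_of_forall_not_hasGap (j := ⟨p + 1, hp1⟩)
      fun q hq hgq => (hmax q hgq).not_gt hq
    have hmul : (d - 1 - p) * t = (d - 1 - (p + 1)) * t + t := by
      rw [show d - 1 - p = d - 1 - (p + 1) + 1 by omega, add_one_mul]
    simp only at htail
    omega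
  · have := (hasGap_iff_of_not_lt hp1).mp hp
    rw [show d - 1 - p = 0 by omega]
    omega

lemma idx_eq_of_forall_not_hasGap (u : SpreadMono n d t) (h : ∀ j, ¬ hasGap n t u.idx j)
    (j : Fin d) : u.idx j = n - (d - 1 - j) * t := by
  have := u.idx_add_mul_eq_of_forall_not_hasGap (j := j) fun q _ => h q
  omega

lemma slexGE_of_forall_not_hasGap (u : SpreadMono n d t) (h : ∀ j, ¬ hasGap n t u.idx j)
    (w : SpreadMono n d t) : slexGE w u :=
  seqLE_of_forall_le fun j => by
    have := u.idx_add_mul_eq_of_forall_not_hasGap (j := j) fun q _ => h q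
    have := w.idx_add_mul_le j
    omega

def bump (u : SpreadMono n d t) (p : Fin d) (hp : u.idx p + 1 + (d - 1 - p) * t ≤ n) :
    SpreadMono n d t where
  idx j := if (j : ℕ) < p then u.idx j else u.idx p + 1 + ((j : ℕ) - p) * t
  one_le j := by
    split
    · exact u.one_le j
    · omega
  le_n j := by
    split
    · exact u.le_n j
    · have : ((j : ℕ) - p) * t ≤ (d - 1 - p) * t := Nat.mul_le_mul_right t (by omega)
      omega
  spread j hj := by
    have hspread := u.spread j hj
    simp only
    split_ifs
    · exact hspread
    · obtain rfl : (⟨j + 1, hj⟩ : Fin d) = p := Fin.ext (by simp only; omega)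
      omega
    · omega
    · rw [show (j : ℕ) + 1 - p = (j - p) + 1 by omega, add_one_mul]
      omega

lemma slexGT_bump (u : SpreadMono n d t) (p : Fin d)
    (hp : u.idx p + 1 + (d - 1 - p) * t ≤ n) : slexGT u (u.bump p hp) :=
  ⟨p, fun j hj => (if_pos (Fin.lt_def.mp hj)).symm, by simp [bump]⟩

lemma slexGE_bump_of_slexGT (u : SpreadMono n d t) {p : Fin d}
    (hp : u.idx p + 1 + (d - 1 - p) * t ≤ n) (hmax : ∀ q, hasGap n t u.idx q → q ≤ p)
    {w : SpreadMono n d t} (huw : slexGT u w) :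
    slexGE (u.bump p hp) w := by
  obtain ⟨s, hagree, hlt⟩ := huw
  rcases lt_trichotomy s p with hsp | rfl | hps
  · refine Or.inr ⟨s, fun j hj => ?_, ?_⟩
    · simp [bump, hj.trans hsp, hagree j hj]
    · simpa [bump, hsp] using hlt
  · refine seqLE_of_forall_le fun j => ?_
    by_cases hjs : j < s
    · simp [bump, hjs, hagree j hjs]
    · have := w.add_mul_le_idx (not_lt.mp hjs)
      simp only [bump, if_neg (Fin.lt_def.not.mp hjs)]
      omega
  · exfalso
    have := u.idx_add_mul_eq_of_forall_not_hasGap (j := s) fun q hq hgq =>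
      (hmax q hgq).not_gt (hps.trans_le hq)
    have := w.idx_add_mul_le s
    omega

end SpreadMono

theorem stmt5_general (n d t : ℕ) (u : SpreadMono n d t) :
    ((∀ j, ¬ hasGap n t u.idx j) →
      (∀ j : Fin d, u.idx j = n - (d - 1 - (j : ℕ)) * t) ∧ ∀ w, slexGE w u) ∧
    (∀ p : Fin d, hasGap n t u.idx p → (∀ q, hasGap n t u.idx q → q ≤ p) →
      ∃ v : SpreadMono n d t,
        (∀ j : Fin d, v.idx j =
          if (j : ℕ) < (p : ℕ) then u.idx j else u.idx p + 1 + ((j : ℕ) - (p : ℕ)) * t) ∧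
        slexGT u v ∧ ∀ w, slexGT u w → slexGE v w) := by
  refine ⟨fun hnone => ⟨u.idx_eq_of_forall_not_hasGap hnone,
    fun w => u.slexGE_of_forall_not_hasGap hnone w⟩, fun p hp hmax => ?_⟩
  have hroom := u.idx_add_one_add_mul_le_of_hasGap hp hmax
  exact ⟨u.bump p hroom, fun _ => rfl, u.slexGT_bump p hroom,
    fun _ => u.slexGE_bump_of_slexGT hroom hmax⟩

/-- **Lemma (successor in the slex order).** Let `u = x_{i_1}⋯x_{i_d} ∈ M_{n,d,t}`.
If `Gap_t(u) = ∅` then `u = x_{n-(d-1)t}⋯x_{n-t}x_n` is the smallest element of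
`M_{n,d,t}`. Otherwise, if `p = max Gap_t(u)`, the largest `v ∈ M_{n,d,t}` with
`v <_slex u` is `v = x_{i_1}⋯x_{i_{p-1}}·x_{i_p+1}·x_{i_p+1+t}⋯x_{i_p+1+(d-p)t}`
(indices before the gap unchanged; from the gap on, `i_p+1, i_p+1+t, i_p+1+2t, …`). -/
theorem stmt5 (n d t : ℕ) (hn : 1 ≤ n) (hd : 1 ≤ d) (ht : 1 ≤ t)
    (hnd : 1 + (d - 1) * t ≤ n) (u : SpreadMono n d t) :
    ((∀ j, ¬ hasGap n t u.idx j) →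
      (∀ j : Fin d, u.idx j = n - (d - 1 - (j : ℕ)) * t) ∧ ∀ w, slexGE w u) ∧
    (∀ p : Fin d, hasGap n t u.idx p → (∀ q, hasGap n t u.idx q → q ≤ p) →
      ∃ v : SpreadMono n d t,
        (∀ j : Fin d, v.idx j =
          if (j : ℕ) < (p : ℕ) then u.idx j else u.idx p + 1 + ((j : ℕ) - (p : ℕ)) * t) ∧
        slexGT u v ∧ ∀ w, slexGT u w → slexGE v w) :=
  stmt5_general n d t u
end

section
/- Let n, d, t ≥ 1 be integers, let u, v ∈ M_{n,d,t} with u ≥_slex v, and set L = L_t(u,v). Then the elementwise image τ^{t−1}(L) equals L_1(u^{τ^{t−1}}, v^{τ^{t−1}}), the squarefree lexsegment in the polynomial ring K[x_1,…,x_{n−(d−1)(t−1)}]. -/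
open MvPolynomial

/-!
Every `t`-spread index sequence dominates `j ↦ (j-1)(t-1)`, and subtracting a common lower
bound from two sequences does not change their lexicographic comparison; so `τ^{t-1}` is an
order embedding for `≥_slex`. Adding the offsets back inverts it, so it is onto, and an
order embedding onto its target maps lexsegments onto lexsegments.
-/

open SpreadMono

namespace SpreadMono

variable {n d t : ℕ}

theorem idx_injective : Function.Injective (idx : SpreadMono n d t → Fin d → ℕ) := by
  rintro ⟨⟩ ⟨⟩ rfl
  rfl

theorem mul_lt_idx (w : SpreadMono n d t) (j : Fin d) : (j : ℕ) * t < w.idx j := by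
  obtain ⟨j, hj⟩ := j
  induction j with
  | zero => rw [zero_mul]; exact w.one_le _
  | succ k ih =>
    have := w.spread ⟨k, by omega⟩ hj
    simp only [Nat.succ_mul] at this ⊢
    linarith [ih (by omega)]

theorem mul_pred_le_idx (w : SpreadMono n d t) (j : Fin d) : (j : ℕ) * (t - 1) ≤ w.idx j :=
  (Nat.mul_le_mul_left _ (Nat.sub_le t 1)).trans (w.mul_lt_idx j).le

theorem seqLT_tsub_iff {f g c : Fin d → ℕ} (hf : c ≤ f) (hg : c ≤ g) :
    seqLT (f - c) (g - c) ↔ seqLT f g := by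
  have hlt : ∀ j, (f - c) j < (g - c) j ↔ f j < g j := fun j => by
    have : c j ≤ f j := hf j; have : c j ≤ g j := hg j; simp only [Pi.sub_apply]; omega
  have heq : ∀ j, (f - c) j = (g - c) j ↔ f j = g j := fun j => by
    have : c j ≤ f j := hf j; have : c j ≤ g j := hg j; simp only [Pi.sub_apply]; omega
  simp only [seqLT, hlt, heq]

theorem seqLE_tsub_iff {f g c : Fin d → ℕ} (hf : c ≤ f) (hg : c ≤ g) :
    seqLE (f - c) (g - c) ↔ seqLE f g := by
  rw [seqLE, seqLE, seqLT_tsub_iff hf hg, tsub_left_inj hf hg]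

def unshift (z : SpreadMono (n - (d - 1) * (t - 1)) d 1) : SpreadMono n d t where
  idx j := z.idx j + j * (t - 1)
  one_le j := le_add_right (z.one_le j)
  le_n j := by
    have hz := z.le_n j
    have h1 := z.one_le j
    have hj : (j : ℕ) * (t - 1) ≤ (d - 1) * (t - 1) := Nat.mul_le_mul_right _ (by omega)
    omega
  spread j h := by
    have := z.spread j h
    simp only [Nat.succ_mul]
    omega

theorem image_lexseg {m s : ℕ} {τ : SpreadMono n d t → SpreadMono m d s}
    (hτ : ∀ w z, slexGE (τ w) (τ z) ↔ slexGE w z) (hsurj : Function.Surjective τ)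
    (u v : SpreadMono n d t) : τ '' lexseg u v = lexseg (τ u) (τ v) := by
  ext z
  obtain ⟨w, rfl⟩ := hsurj z
  constructor
  · rintro ⟨w', ⟨hu, hv⟩, hw'⟩
    rw [← hw']
    exact ⟨(hτ _ _).2 hu, (hτ _ _).2 hv⟩
  · rintro ⟨hu, hv⟩
    exact ⟨w, ⟨(hτ _ _).1 hu, (hτ _ _).1 hv⟩, rfl⟩

end SpreadMono

theorem stmt8_general (n d t : ℕ)
    (u v : SpreadMono n d t)
    (τ : SpreadMono n d t → SpreadMono (n - (d - 1) * (t - 1)) d 1)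
    (hτ : ∀ w j, (τ w).idx j = w.idx j - (j : ℕ) * (t - 1)) :
    τ '' lexseg u v = lexseg (τ u) (τ v) := by
  have hτidx (w : SpreadMono n d t) : (τ w).idx = w.idx - fun j : Fin d => (j : ℕ) * (t - 1) :=
    funext (hτ w)
  refine image_lexseg (fun w z => ?_) (fun z => ⟨unshift z, idx_injective ?_⟩) u v
  · rw [slexGE, slexGE, hτidx, hτidx, seqLE_tsub_iff w.mul_pred_le_idx z.mul_pred_le_idx]
  · funext j
    simp [hτ, unshift]

/-- **Corollary.** For `n,d,t ≥ 1` and `u ≥_slex v` in `M_{n,d,t}`, the elementwise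
image under `τ^{t-1}` of the lexsegment `L_t(u,v)` is the squarefree lexsegment
`L_1(u^{τ^{t-1}}, v^{τ^{t-1}})` of `K[x_1,…,x_{n-(d-1)(t-1)}]`. -/
theorem stmt8 (n d t : ℕ) (hn : 1 ≤ n) (hd : 1 ≤ d) (ht : 1 ≤ t)
    (u v : SpreadMono n d t) (huv : slexGE u v)
    (τ : SpreadMono n d t → SpreadMono (n - (d - 1) * (t - 1)) d 1)
    (hτ : ∀ w j, (τ w).idx j = w.idx j - (j : ℕ) * (t - 1)) :
    τ '' lexseg u v = lexseg (τ u) (τ v) :=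
  stmt8_general n d t u v τ hτ
end

section
/- Let t ≥ 0 and n, d ≥ 1 be integers, and let u, v ∈ M_{n,d,t} with u ≥_slex v (≥_lex if t = 0), min(u) = 1 and min(v) > 1. Let I = (L_t(u,v)) ⊆ S = K[x_1,…,x_n]. Then I is a completely t-spread lexsegment ideal, i.e., I = (L^i_t(v)) ∩ (L^f_t(u)), if and only if the ideal I^{τ^t} = (L_0(u^{τ^t}, v^{τ^t})) is a completely 0-spread lexsegment ideal in the polynomial ring K[x_1,…,x_{n−(d−1)t}]. -/
open MvPolynomial

open SpreadMono

open Finset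

/-!
Under `min u = 1 < min v`, completeness of `L_t(u,v)` is equivalent to the criterion
`u ≥_slex x_1 w / x_{min w}` for every `w <_slex v`. If the criterion fails at `w`, then
`x_1 w` lies in `(L^i_t(v)) ∩ (L^f_t(u))`, yet each of its degree-`d` divisors is either `w`
itself or contains `x_1` and is then `≥_slex x_1 w / x_{min w} >_slex u`. Conversely, a monomial
divisible by `w₁ ≥_slex v` and by `w₂ ≤_slex u` with `w₁ >_slex u` and `w₂ <_slex v` contains
`x_1` (as `min w₁ = 1`) and `w₂` (which avoids `x_1`), hence `x_1 w₂ / x_{min w₂} ∈ L_t(u,v)`.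

The criterion only compares index sequences lexicographically, and `τ^t` subtracts `(j - 1) t`
from the `j`-th index: a bijection onto `M_{n-(d-1)t,d,0}` that preserves the lexicographic
order and commutes with `w ↦ x_1 w / x_{min w}`.
-/

theorem seqLE_iff_toLex_le {d : ℕ} {f g : Fin d → ℕ} : seqLE f g ↔ toLex f ≤ toLex g := by
  rw [le_iff_eq_or_lt, toLex_inj]
  rfl

theorem toLex_sub_lt_toLex_sub_iff {ι : Type*} [LT ι] {f g c : ι → ℕ} (hf : c ≤ f) (hg : c ≤ g) :
    toLex (f - c) < toLex (g - c) ↔ toLex f < toLex g := by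
  refine exists_congr fun i => and_congr (forall₂_congr fun j _ => ?_) ?_
  · exact tsub_left_inj (hf j) (hg j)
  · exact tsub_lt_tsub_iff_right (hf i)

theorem toLex_sub_le_toLex_sub_iff {d : ℕ} {f g c : Fin d → ℕ} (hf : c ≤ f) (hg : c ≤ g) :
    toLex (f - c) ≤ toLex (g - c) ↔ toLex f ≤ toLex g := by
  rw [← not_lt, ← not_lt]
  exact not_congr (toLex_sub_lt_toLex_sub_iff hg hf)

theorem apply_zero_le_of_toLex_lt {d : ℕ} [NeZero d] {f g : Fin d → ℕ}
    (h : toLex f < toLex g) : f 0 ≤ g 0 := by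
  obtain ⟨i, hlt, hi⟩ := h
  rcases eq_or_ne i 0 with rfl | hi0
  · exact hi.le
  · exact (hlt 0 (Fin.pos_iff_ne_zero.2 hi0)).le

theorem toLex_lt_of_apply_zero_lt {d : ℕ} [NeZero d] {f g : Fin d → ℕ}
    (h : f 0 < g 0) : toLex f < toLex g :=
  ⟨0, fun j hj => absurd hj (Fin.not_lt_zero j), h⟩

theorem Monotone.le_of_map_le_add_map {α : Type*} [LinearOrder α] {d e : ℕ} {f : Fin d → α}
    {g : Fin e → α} (hf : Monotone f) (hg : Monotone g) {R : Multiset α}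
    (h : univ.val.map f ≤ R + univ.val.map g) {j : Fin d} {k : Fin e}
    (hR : ∀ x ∈ R, x ≤ g k) (hjk : e - k ≤ d - j) : f j ≤ g k := by
  classical
  by_contra! hlt
  have hf_above : d - j ≤ (univ.val.map f).countP (g k < ·) := by
    rw [Multiset.countP_map, ← Fin.card_Ici]
    exact card_le_card fun i hi => mem_filter.2 ⟨mem_univ i, hlt.trans_le (hf (mem_Ici.1 hi))⟩
  have hg_above : (univ.val.map g).countP (g k < ·) ≤ e - 1 - k := by
    rw [Multiset.countP_map, ← Fin.card_Ioi]
    change #(univ.filter fun i => g k < g i) ≤ _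
    refine card_le_card fun i hi => mem_Ioi.2 (lt_of_not_ge fun (hik : i ≤ k) => ?_)
    exact (mem_filter.1 hi).2.not_ge (hg hik)
  have hR_above : R.countP (g k < ·) = 0 :=
    Multiset.countP_eq_zero.2 fun x hx => (hR x hx).not_gt
  have := Multiset.countP_le_of_le (g k < ·) h
  rw [Multiset.countP_add] at this
  have := k.isLt
  omega

namespace SpreadMono

variable {n d t : ℕ}

theorem ext_idx {u w : SpreadMono n d t} (h : u.idx = w.idx) : u = w := by
  cases u; cases w; cases h; rfl

theorem slexGE_iff {u w : SpreadMono n d t} : slexGE u w ↔ toLex u.idx ≤ toLex w.idx :=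
  seqLE_iff_toLex_le

theorem slexGT_iff {u w : SpreadMono n d t} : slexGT u w ↔ toLex u.idx < toLex w.idx :=
  Iff.rfl

theorem monotone_idx (w : SpreadMono n d t) : Monotone w.idx := by
  cases d with
  | zero => exact fun j => j.elim0
  | succ d =>
    exact Fin.monotone_iff_le_succ.2 fun j => (Nat.le_add_right _ t).trans (w.spread _ _)

theorem mul_le_idx (w : SpreadMono n d t) (j : Fin d) : (j : ℕ) * t ≤ w.idx j := by
  obtain ⟨k, hk⟩ := j
  induction k with
  | zero => simp
  | succ k ih =>
    have hstep : w.idx ⟨k, _⟩ + t ≤ w.idx ⟨k + 1, hk⟩ := w.spread ⟨k, by omega⟩ hk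
    have hk' : k * t ≤ w.idx ⟨k, _⟩ := ih (by omega)
    change (k + 1) * t ≤ _
    rw [Nat.succ_mul]
    omega

theorem var_le_var_iff {w w' : SpreadMono n d t} {j k : Fin d} :
    w.var j ≤ w'.var k ↔ w.idx j ≤ w'.idx k := by
  have := w.one_le j
  have := w'.one_le k
  simp only [Fin.le_def, var]
  omega

theorem monotone_var (w : SpreadMono n d t) : Monotone w.var :=
  fun _ _ hjk => var_le_var_iff.2 (w.monotone_idx hjk)

theorem var_eq_zero_iff [NeZero n] {w : SpreadMono n d t} {j : Fin d} :
    w.var j = 0 ↔ w.idx j = 1 := by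
  have := w.one_le j
  simp only [Fin.ext_iff, var, Fin.val_zero]
  omega

theorem zero_mem_map_var_iff [NeZero n] [NeZero d] {w : SpreadMono n d t} :
    (0 : Fin n) ∈ univ.val.map w.var ↔ w.idx 0 = 1 := by
  simp only [Multiset.mem_map, Finset.mem_val, mem_univ, true_and, var_eq_zero_iff]
  refine ⟨fun ⟨j, hj⟩ => ?_, fun h => ⟨0, h⟩⟩
  have := w.monotone_idx (Fin.zero_le j)
  have := w.one_le 0
  omega

theorem toMultiset_expVec (w : SpreadMono n d t) :
    Finsupp.toMultiset w.expVec = univ.val.map w.var := by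
  simp only [expVec, Finsupp.toMultiset_sum, Finsupp.toMultiset_single, one_nsmul]
  rw [← Multiset.sum_map_singleton (univ.val.map w.var), Multiset.map_map]
  rfl

theorem expVec_le_iff {w : SpreadMono n d t} {a : Fin n →₀ ℕ} :
    w.expVec ≤ a ↔ univ.val.map w.var ≤ Finsupp.toMultiset a := by
  classical
  rw [← toMultiset_expVec, ← Finsupp.coe_orderIsoMultiset, OrderIso.le_iff_le]

theorem toMultiset_single_zero_add_expVec [NeZero n] (w : SpreadMono n d t) :
    Finsupp.toMultiset (Finsupp.single 0 1 + w.expVec) = 0 ::ₘ univ.val.map w.var := by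
  rw [Finsupp.toMultiset_add, Finsupp.toMultiset_single, one_nsmul, toMultiset_expVec,
    Multiset.singleton_add]

theorem idx_le_of_expVec_le_single_add [NeZero n] {w w' : SpreadMono n d t}
    (h : w.expVec ≤ Finsupp.single 0 1 + w'.expVec) (j : Fin d) : w.idx j ≤ w'.idx j := by
  rw [expVec_le_iff, toMultiset_single_zero_add_expVec, ← Multiset.singleton_add] at h
  exact var_le_var_iff.1 <| w.monotone_var.le_of_map_le_add_map w'.monotone_var h
    (by simp) le_rfl

theorem eq_of_expVec_le_single_add [NeZero n] [NeZero d] {w w' : SpreadMono n d t}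
    (h : w.expVec ≤ Finsupp.single 0 1 + w'.expVec) (h0 : w.idx 0 ≠ 1) : w = w' := by
  have hle := expVec_le_iff.1 h
  rw [toMultiset_single_zero_add_expVec, Multiset.le_cons_of_notMem
    (mt zero_mem_map_var_iff.1 h0)] at hle
  have heq := Multiset.eq_of_le_of_card_le hle (by simp)
  refine ext_idx (funext fun j => (idx_le_of_expVec_le_single_add h j).antisymm ?_)
  exact var_le_var_iff.1 <| w'.monotone_var.le_of_map_le_add_map w.monotone_var (R := 0)
    (by rw [zero_add, heq]) (by simp) le_rfl

/-- The monomial `x_1 w / x_{min w}`. -/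
def withMinOne (w : SpreadMono n d t) : SpreadMono n d t where
  idx j := if (j : ℕ) = 0 then 1 else w.idx j
  one_le j := by
    split_ifs
    exacts [le_rfl, w.one_le j]
  le_n j := by
    split_ifs
    exacts [(w.one_le j).trans (w.le_n j), w.le_n j]
  spread j hj := by
    have := w.spread j hj
    have := w.one_le j
    simp only [Nat.add_one_ne_zero, if_false]
    split_ifs <;> omega

theorem withMinOne_idx (w : SpreadMono n d t) (j : Fin d) :
    w.withMinOne.idx j = if (j : ℕ) = 0 then 1 else w.idx j :=
  rfl

theorem withMinOne_idx_zero [NeZero d] (w : SpreadMono n d t) : w.withMinOne.idx 0 = 1 := by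
  simp [withMinOne_idx]

theorem expVec_withMinOne_le [NeZero n] [NeZero d] (w : SpreadMono n d t) :
    w.withMinOne.expVec ≤ Finsupp.single 0 1 + w.expVec := by
  calc w.withMinOne.expVec
      = Finsupp.single 0 1 + ∑ j ∈ univ.erase 0, Finsupp.single (w.var j) 1 := by
        rw [expVec, ← add_sum_erase _ _ (mem_univ 0), var_eq_zero_iff.2 w.withMinOne_idx_zero]
        refine congrArg _ (sum_congr rfl fun j hj => ?_)
        have hj : (j : ℕ) ≠ 0 := Fin.val_ne_zero_iff.2 (ne_of_mem_erase hj)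
        have hidx : w.withMinOne.idx j = w.idx j := by simp [withMinOne_idx, hj]
        simp only [var, hidx]
    _ ≤ Finsupp.single 0 1 + w.expVec := by
        grw [expVec, sum_le_sum_of_subset (erase_subset 0 univ)]

theorem mem_idealOf_iff {K : Type*} [Field K] {A : Set (SpreadMono n d t)}
    {p : MvPolynomial (Fin n) K} :
    p ∈ idealOf K A ↔ ∀ a ∈ p.support, ∃ w ∈ A, w.expVec ≤ a := by
  rw [idealOf, show (fun w => toMvPoly K w) '' A = (fun s => monomial s (1 : K)) '' (expVec '' A)
    from (Set.image_image (fun s => monomial s (1 : K)) expVec A).symm,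
    mem_ideal_span_monomial_image]
  simp only [Set.exists_mem_image]

theorem monomial_mem_idealOf_iff {K : Type*} [Field K] {A : Set (SpreadMono n d t)}
    {a : Fin n →₀ ℕ} : monomial a (1 : K) ∈ idealOf K A ↔ ∃ w ∈ A, w.expVec ≤ a := by
  simp [mem_idealOf_iff]

def IsCompleteLexseg (u v : SpreadMono n d t) : Prop :=
  ∀ a : Fin n →₀ ℕ, (∃ w ∈ initialSeg v, w.expVec ≤ a) → (∃ w ∈ finalSeg u, w.expVec ≤ a) →
    ∃ w ∈ lexseg u v, w.expVec ≤ a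

theorem idealOf_lexseg_eq_inf_iff (K : Type*) [Field K] (u v : SpreadMono n d t) :
    idealOf K (lexseg u v) = idealOf K (initialSeg v) ⊓ idealOf K (finalSeg u) ↔
      IsCompleteLexseg u v := by
  have hle : idealOf K (lexseg u v) ≤ idealOf K (initialSeg v) ⊓ idealOf K (finalSeg u) :=
    le_inf (Ideal.span_mono (Set.image_mono fun _ hw => hw.2))
      (Ideal.span_mono (Set.image_mono fun _ hw => hw.1))
  rw [le_antisymm_iff, and_iff_right hle]
  constructor
  · intro h a hv hu
    exact monomial_mem_idealOf_iff.1
      (h (Submodule.mem_inf.2 ⟨monomial_mem_idealOf_iff.2 hv, monomial_mem_idealOf_iff.2 hu⟩))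
  · intro h p hp
    obtain ⟨hv, hu⟩ := Submodule.mem_inf.1 hp
    rw [mem_idealOf_iff] at hv hu ⊢
    exact fun a ha => h a (hv a ha) (hu a ha)

def CompletenessCriterion (u v : SpreadMono n d t) : Prop :=
  ∀ w, slexGT v w → slexGE u w.withMinOne

theorem isCompleteLexseg_of_completenessCriterion [NeZero d] {u v : SpreadMono n d t}
    (humin : u.idx 0 = 1) (hvmin : 1 < v.idx 0) (h : CompletenessCriterion u v) :
    IsCompleteLexseg u v := by
  classical
  rintro a ⟨w₁, hw₁v, hw₁a⟩ ⟨w₂, huw₂, hw₂a⟩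
  by_cases hu : slexGE u w₁
  · exact ⟨w₁, ⟨hu, hw₁v⟩, hw₁a⟩
  by_cases hv : slexGE w₂ v
  · exact ⟨w₂, ⟨huw₂, hv⟩, hw₂a⟩
  rw [slexGE_iff, not_le] at hu hv
  have hw₁ : w₁.idx 0 = 1 := le_antisymm (humin ▸ apply_zero_le_of_toLex_lt hu) (w₁.one_le 0)
  have hw₂ : w₂.idx 0 ≠ 1 := (hvmin.trans_le (apply_zero_le_of_toLex_lt hv)).ne'
  have : NeZero n := ⟨(zero_lt_one.trans_le ((w₁.one_le 0).trans (w₁.le_n 0))).ne'⟩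
  refine ⟨w₂.withMinOne, ⟨h w₂ hv, ?_⟩, w₂.expVec_withMinOne_le.trans ?_⟩
  · rw [slexGE_iff]
    exact (toLex_lt_of_apply_zero_lt (by rwa [withMinOne_idx_zero])).le
  · rw [← Finsupp.orderIsoMultiset.le_iff_le, Finsupp.coe_orderIsoMultiset,
      toMultiset_single_zero_add_expVec, Multiset.cons_le_of_notMem
      (mt zero_mem_map_var_iff.1 hw₂)]
    rw [expVec_le_iff] at hw₁a hw₂a
    exact ⟨Multiset.mem_of_le hw₁a (zero_mem_map_var_iff.2 hw₁), hw₂a⟩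

theorem completenessCriterion_of_isCompleteLexseg [NeZero d] {u v : SpreadMono n d t}
    (humin : u.idx 0 = 1) (hvmin : 1 < v.idx 0) (h : IsCompleteLexseg u v) :
    CompletenessCriterion u v := by
  intro w₂ hvw₂
  have hw₂ : 1 < w₂.idx 0 := hvmin.trans_le (apply_zero_le_of_toLex_lt hvw₂)
  have : NeZero n := ⟨(zero_lt_one.trans_le ((w₂.one_le 0).trans (w₂.le_n 0))).ne'⟩
  obtain ⟨w, ⟨huw, hwv⟩, hwa⟩ := h (Finsupp.single 0 1 + w₂.expVec)
    ⟨w₂.withMinOne, slexGE_iff.2 (toLex_lt_of_apply_zero_lt (by rwa [withMinOne_idx_zero])).le,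
      w₂.expVec_withMinOne_le⟩
    ⟨w₂, slexGE_iff.2 (toLex_lt_of_apply_zero_lt (by rwa [humin])).le, le_add_self⟩
  rw [slexGE_iff] at huw hwv ⊢
  by_cases hw₀ : w.idx 0 = 1
  · refine huw.trans (Pi.toLex_monotone fun j => ?_)
    rw [withMinOne_idx]
    split_ifs with hj
    · rw [show j = 0 from Fin.ext hj, hw₀]
    · exact idx_le_of_expVec_le_single_add hwa j
  · rw [eq_of_expVec_le_single_add hwa hw₀] at hwv
    exact absurd hvw₂ (not_lt.2 hwv)

theorem isCompleteLexseg_iff_completenessCriterion [NeZero d] {u v : SpreadMono n d t}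
    (humin : u.idx 0 = 1) (hvmin : 1 < v.idx 0) :
    IsCompleteLexseg u v ↔ CompletenessCriterion u v :=
  ⟨completenessCriterion_of_isCompleteLexseg humin hvmin,
    isCompleteLexseg_of_completenessCriterion humin hvmin⟩

theorem exists_idx_eq_add_mul (z : SpreadMono (n - (d - 1) * t) d 0) :
    ∃ w : SpreadMono n d t, ∀ j, w.idx j = z.idx j + (j : ℕ) * t := by
  refine ⟨⟨fun j => z.idx j + (j : ℕ) * t, fun j => (z.one_le j).trans (Nat.le_add_right _ _),
    fun j => ?_, fun j hj => ?_⟩, fun _ => rfl⟩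
  · have := z.le_n j
    have := z.one_le j
    have : (j : ℕ) * t ≤ (d - 1) * t := Nat.mul_le_mul_right t (by omega)
    omega
  · have := z.spread j hj
    simp only [Nat.succ_mul]
    omega

theorem completenessCriterion_iff_of_idx_eq_sub {u v : SpreadMono n d t}
    (τ : SpreadMono n d t → SpreadMono (n - (d - 1) * t) d 0)
    (hτ : ∀ w j, (τ w).idx j = w.idx j - (j : ℕ) * t) :
    CompletenessCriterion (τ u) (τ v) ↔ CompletenessCriterion u v := by
  set c : Fin d → ℕ := fun j => (j : ℕ) * t
  have hc (w : SpreadMono n d t) : c ≤ w.idx := w.mul_le_idx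
  have hτ_idx (w : SpreadMono n d t) : (τ w).idx = w.idx - c := funext (hτ w)
  have hτ_withMinOne (w : SpreadMono n d t) : (τ w).withMinOne.idx = w.withMinOne.idx - c := by
    ext j
    simp only [withMinOne_idx, hτ, Pi.sub_apply, c]
    split_ifs with hj <;> simp [hj]
  have hτ_surj : Function.Surjective τ := fun z => by
    obtain ⟨w, hw⟩ := exists_idx_eq_add_mul (t := t) z
    exact ⟨w, ext_idx (funext fun j => by rw [hτ, hw, Nat.add_sub_cancel])⟩
  simp only [CompletenessCriterion, hτ_surj.forall, slexGT_iff, slexGE_iff, hτ_idx,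
    hτ_withMinOne]
  refine forall_congr' fun w => imp_congr ?_ ?_
  · exact toLex_sub_lt_toLex_sub_iff (hc v) (hc w)
  · exact toLex_sub_le_toLex_sub_iff (hc u) (hc w.withMinOne)

end SpreadMono

theorem stmt10_general {K : Type*} [Field K] (n d t : ℕ) (hd : 1 ≤ d)
    (u v : SpreadMono n d t)
    (humin : u.idx ⟨0, hd⟩ = 1) (hvmin : 1 < v.idx ⟨0, hd⟩)
    (τ : SpreadMono n d t → SpreadMono (n - (d - 1) * t) d 0)
    (hτ : ∀ w j, (τ w).idx j = w.idx j - (j : ℕ) * t) :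
    idealOf K (lexseg u v) = idealOf K (initialSeg v) ⊓ idealOf K (finalSeg u) ↔
      idealOf K (lexseg (τ u) (τ v)) =
        idealOf K (initialSeg (τ v)) ⊓ idealOf K (finalSeg (τ u)) := by
  have : NeZero d := ⟨by omega⟩
  have hτ₀ (w : SpreadMono n d t) : (τ w).idx 0 = w.idx 0 := by
    rw [hτ, Fin.val_zero, zero_mul, Nat.sub_zero]
  rw [idealOf_lexseg_eq_inf_iff, idealOf_lexseg_eq_inf_iff,
    isCompleteLexseg_iff_completenessCriterion humin hvmin,
    isCompleteLexseg_iff_completenessCriterion ((hτ₀ u).trans humin) ((hτ₀ v).symm ▸ hvmin),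
    completenessCriterion_iff_of_idx_eq_sub τ hτ]

/-- **Lemma.** Let `t ≥ 0`, `n,d ≥ 1`, and `u ≥_slex v` in `M_{n,d,t}` with `min(u) = 1` and
`min(v) > 1`. Then `I = (L_t(u,v))` is a completely `t`-spread lexsegment ideal iff
`I^{τ^t} = (L_0(u^{τ^t}, v^{τ^t}))` is a completely `0`-spread lexsegment ideal of
`K[x_1,…,x_{n-(d-1)t}]`, where `τ^t : x_{i_1}⋯x_{i_d} ↦ ∏_j x_{i_j-(j-1)t}`. -/
theorem stmt10 {K : Type*} [Field K] (n d t : ℕ) (hn : 1 ≤ n) (hd : 1 ≤ d)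
    (u v : SpreadMono n d t) (huv : slexGE u v)
    (humin : u.idx ⟨0, hd⟩ = 1) (hvmin : 1 < v.idx ⟨0, hd⟩)
    (τ : SpreadMono n d t → SpreadMono (n - (d - 1) * t) d 0)
    (hτ : ∀ w j, (τ w).idx j = w.idx j - (j : ℕ) * t) :
    idealOf K (lexseg u v) = idealOf K (initialSeg v) ⊓ idealOf K (finalSeg u) ↔
      idealOf K (lexseg (τ u) (τ v)) =
        idealOf K (initialSeg (τ v)) ⊓ idealOf K (finalSeg (τ u)) :=
  stmt10_general n d t hd u v humin hvmin τ hτ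
end

section
/- Let t ≥ 1 be an integer and K a field. In S = K[x_1,…,x_{3+3t}], set u = x_1x_{3+t}x_{3+2t}x_{3+3t} and v = x_2x_{2+t}x_{3+2t}x_{3+3t}. Then the 4-generated t-spread lexsegment ideal I = (L_t(u,v)) = (x_1x_{3+t}x_{3+2t}x_{3+3t}, x_2x_{2+t}x_{2+2t}x_{2+3t}, x_2x_{2+t}x_{2+2t}x_{3+3t}, x_2x_{2+t}x_{3+2t}x_{3+3t}) is a completely t-spread lexsegment ideal, i.e., I = (L^i_t(v)) ∩ (L^f_t(u)). -/
open MvPolynomial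

section Aux

variable {n t : ℕ}

lemma SpreadMono.ext' {d : ℕ} {a b : SpreadMono n d t} (h : a.idx = b.idx) : a = b := by
  cases a; cases b; simpa using h

lemma SpreadMono.one_le_apply_var {d : ℕ} {w : SpreadMono n d t} {e : Fin n →₀ ℕ}
    (h : w.expVec ≤ e) (j : Fin d) : 1 ≤ e (w.var j) := by
  refine le_trans ?_ (Finsupp.le_def.mp h (w.var j))
  rw [SpreadMono.expVec, Finsupp.finset_sum_apply]
  calc 1 = Finsupp.single (w.var j) 1 (w.var j) := by simp
  _ ≤ _ := Finset.single_le_sum (f := fun k => Finsupp.single (w.var k) 1 (w.var j))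
      (fun k _ => Nat.zero_le _) (Finset.mem_univ j)

lemma SpreadMono.var_inj4 (ht : 1 ≤ t) (w : SpreadMono n 4 t) {j k : Fin 4}
    (h : w.var j = w.var k) : j = k := by
  have h01 : w.idx ⟨0, by norm_num⟩ + t ≤ w.idx ⟨1, by norm_num⟩ :=
    w.spread ⟨0, by norm_num⟩ (by norm_num)
  have h12 : w.idx ⟨1, by norm_num⟩ + t ≤ w.idx ⟨2, by norm_num⟩ :=
    w.spread ⟨1, by norm_num⟩ (by norm_num)
  have h23 : w.idx ⟨2, by norm_num⟩ + t ≤ w.idx ⟨3, by norm_num⟩ :=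
    w.spread ⟨2, by norm_num⟩ (by norm_num)
  have o0 := w.one_le ⟨0, by norm_num⟩
  have o1 := w.one_le ⟨1, by norm_num⟩
  have o2 := w.one_le ⟨2, by norm_num⟩
  fin_cases j <;> fin_cases k <;>
    first
      | rfl
      | (exfalso; simp only [SpreadMono.var, Fin.mk.injEq] at h; omega)

lemma SpreadMono.expVec_le_of (ht : 1 ≤ t) (w : SpreadMono n 4 t) (e : Fin n →₀ ℕ)
    (h : ∀ j : Fin 4, 1 ≤ e (w.var j)) : w.expVec ≤ e := by
  rw [Finsupp.le_def]
  intro i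
  rw [SpreadMono.expVec, Finsupp.finset_sum_apply]
  by_cases hx : ∃ j, w.var j = i
  · obtain ⟨j, rfl⟩ := hx
    calc (∑ k, Finsupp.single (w.var k) 1 (w.var j))
        = ∑ k, if w.var k = w.var j then 1 else 0 := by
          refine Finset.sum_congr rfl fun k _ => ?_
          simp [Finsupp.single_apply]
      _ = ∑ k, if k = j then 1 else 0 := by
          refine Finset.sum_congr rfl fun k _ => ?_
          congr 1
          simp only [eq_iff_iff]
          exact ⟨fun hh => SpreadMono.var_inj4 ht w hh, fun hh => hh ▸ rfl⟩
      _ = 1 := by simp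
      _ ≤ e (w.var j) := h j
  · push_neg at hx
    have : (∑ k, Finsupp.single (w.var k) 1 i) = 0 :=
      Finset.sum_eq_zero fun k _ => by simp [Finsupp.single_apply, hx k]
    omega

lemma seqLT4_iff {f g : Fin 4 → ℕ} :
    SpreadMono.seqLT f g ↔ (f 0 < g 0) ∨ (f 0 = g 0 ∧ f 1 < g 1) ∨
      (f 0 = g 0 ∧ f 1 = g 1 ∧ f 2 < g 2) ∨
      (f 0 = g 0 ∧ f 1 = g 1 ∧ f 2 = g 2 ∧ f 3 < g 3) := by
  constructor
  · rintro ⟨s, hpre, hlt⟩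
    fin_cases s
    · exact Or.inl hlt
    · exact Or.inr (Or.inl ⟨hpre 0 (by decide), hlt⟩)
    · exact Or.inr (Or.inr (Or.inl ⟨hpre 0 (by decide), hpre 1 (by decide), hlt⟩))
    · exact Or.inr (Or.inr (Or.inr
        ⟨hpre 0 (by decide), hpre 1 (by decide), hpre 2 (by decide), hlt⟩))
  · rintro (h | ⟨e0, h⟩ | ⟨e0, e1, h⟩ | ⟨e0, e1, e2, h⟩)
    · exact ⟨0, fun j hj => absurd hj (by simp), h⟩
    · exact ⟨1, fun j hj => by
        fin_cases j <;> first | exact e0 | exact absurd hj (by decide), h⟩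
    · exact ⟨2, fun j hj => by
        fin_cases j <;> first | exact e0 | exact e1 | exact absurd hj (by decide), h⟩
    · exact ⟨3, fun j hj => by
        fin_cases j <;> first | exact e0 | exact e1 | exact e2 | exact absurd hj (by decide), h⟩

lemma funeq4 {f g : Fin 4 → ℕ} (h0 : f 0 = g 0) (h1 : f 1 = g 1) (h2 : f 2 = g 2)
    (h3 : f 3 = g 3) : f = g := by
  funext j; fin_cases j <;> tauto

lemma spread_facts (w : SpreadMono (3 + 3 * t) 4 t) :
    1 ≤ w.idx 0 ∧ w.idx 0 + t ≤ w.idx 1 ∧ w.idx 1 + t ≤ w.idx 2 ∧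
      w.idx 2 + t ≤ w.idx 3 ∧ w.idx 3 ≤ 3 + 3 * t :=
  ⟨w.one_le 0, w.spread 0 (by norm_num), w.spread 1 (by norm_num), w.spread 2 (by norm_num),
    w.le_n 3⟩

lemma idx_vals {w : SpreadMono n 4 t} {a b c d : ℕ} (h : w.idx = ![a, b, c, d]) :
    w.idx 0 = a ∧ w.idx 1 = b ∧ w.idx 2 = c ∧ w.idx 3 = d := by
  refine ⟨?_, ?_, ?_, ?_⟩ <;> simp [h]

lemma classif_init (ht : 1 ≤ t) {v g2 g3 w : SpreadMono (3 + 3 * t) 4 t}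
    (hv : v.idx = ![2, 2 + t, 3 + 2 * t, 3 + 3 * t])
    (hg2 : g2.idx = ![2, 2 + t, 2 + 2 * t, 2 + 3 * t])
    (hg3 : g3.idx = ![2, 2 + t, 2 + 2 * t, 3 + 3 * t])
    (hw : SpreadMono.slexGE w v) : w.idx 0 = 1 ∨ w = g2 ∨ w = g3 ∨ w = v := by
  obtain ⟨f1, f2, f3, f4, f5⟩ := spread_facts w
  obtain ⟨v0, v1, v2, v3⟩ := idx_vals hv
  obtain ⟨a0, a1, a2, a3⟩ := idx_vals hg2
  obtain ⟨b0, b1, b2, b3⟩ := idx_vals hg3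
  rcases hw with heq | hlt
  · exact Or.inr (Or.inr (Or.inr (SpreadMono.ext' heq)))
  · rw [seqLT4_iff] at hlt
    rcases hlt with h | ⟨e0, h⟩ | ⟨e0, e1, h⟩ | ⟨e0, e1, e2, h⟩
    · left; omega
    · exfalso; omega
    · have h3 : w.idx 3 = 2 + 3 * t ∨ w.idx 3 = 3 + 3 * t := by omega
      rcases h3 with h3 | h3
      · exact Or.inr (Or.inl (SpreadMono.ext'
          (funeq4 (by omega) (by omega) (by omega) (by omega))))
      · exact Or.inr (Or.inr (Or.inl (SpreadMono.ext'
          (funeq4 (by omega) (by omega) (by omega) (by omega)))))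
    · exfalso; omega

lemma classif_final (ht : 1 ≤ t) {u w : SpreadMono (3 + 3 * t) 4 t}
    (hu : u.idx = ![1, 3 + t, 3 + 2 * t, 3 + 3 * t])
    (hw : SpreadMono.slexGE u w) : w = u ∨ 2 ≤ w.idx 0 := by
  obtain ⟨f1, f2, f3, f4, f5⟩ := spread_facts w
  obtain ⟨u0, u1, u2, u3⟩ := idx_vals hu
  rcases hw with heq | hlt
  · exact Or.inl (SpreadMono.ext' heq.symm)
  · rw [seqLT4_iff] at hlt
    rcases hlt with h | ⟨e0, h⟩ | ⟨e0, e1, h⟩ | ⟨e0, e1, e2, h⟩ <;>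
      first | (right; omega) | (exfalso; omega)

lemma mem_lexseg4 (ht : 1 ≤ t) {u v g2 g3 : SpreadMono (3 + 3 * t) 4 t}
    (hu : u.idx = ![1, 3 + t, 3 + 2 * t, 3 + 3 * t])
    (hv : v.idx = ![2, 2 + t, 3 + 2 * t, 3 + 3 * t])
    (hg2 : g2.idx = ![2, 2 + t, 2 + 2 * t, 2 + 3 * t])
    (hg3 : g3.idx = ![2, 2 + t, 2 + 2 * t, 3 + 3 * t]) :
    u ∈ SpreadMono.lexseg u v ∧ g2 ∈ SpreadMono.lexseg u v ∧
      g3 ∈ SpreadMono.lexseg u v ∧ v ∈ SpreadMono.lexseg u v := by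
  obtain ⟨u0, u1, u2, u3⟩ := idx_vals hu
  obtain ⟨v0, v1, v2, v3⟩ := idx_vals hv
  obtain ⟨a0, a1, a2, a3⟩ := idx_vals hg2
  obtain ⟨b0, b1, b2, b3⟩ := idx_vals hg3
  refine ⟨⟨Or.inl rfl, Or.inr (seqLT4_iff.mpr (Or.inl (by omega)))⟩,
    ⟨Or.inr (seqLT4_iff.mpr (Or.inl (by omega))),
      Or.inr (seqLT4_iff.mpr (Or.inr (Or.inr (Or.inl ⟨by omega, by omega, by omega⟩))))⟩,
    ⟨Or.inr (seqLT4_iff.mpr (Or.inl (by omega))),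
      Or.inr (seqLT4_iff.mpr (Or.inr (Or.inr (Or.inl ⟨by omega, by omega, by omega⟩))))⟩,
    ⟨Or.inr (seqLT4_iff.mpr (Or.inl (by omega))), Or.inl rfl⟩⟩

lemma seg_eq4 (ht : 1 ≤ t) {u v g2 g3 : SpreadMono (3 + 3 * t) 4 t}
    (hu : u.idx = ![1, 3 + t, 3 + 2 * t, 3 + 3 * t])
    (hv : v.idx = ![2, 2 + t, 3 + 2 * t, 3 + 3 * t])
    (hg2 : g2.idx = ![2, 2 + t, 2 + 2 * t, 2 + 3 * t])
    (hg3 : g3.idx = ![2, 2 + t, 2 + 2 * t, 3 + 3 * t]) :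
    SpreadMono.lexseg u v = {u, g2, g3, v} := by
  obtain ⟨mu, mg2, mg3, mv⟩ := mem_lexseg4 ht hu hv hg2 hg3
  ext w
  simp only [Set.mem_insert_iff, Set.mem_singleton_iff]
  constructor
  · rintro ⟨h1, h2⟩
    rcases classif_final ht hu h1 with rfl | hp
    · exact Or.inl rfl
    · rcases classif_init ht hv hg2 hg3 h2 with h0 | rfl | rfl | rfl
      · exfalso; omega
      · exact Or.inr (Or.inl rfl)
      · exact Or.inr (Or.inr (Or.inl rfl))
      · exact Or.inr (Or.inr (Or.inr rfl))
  · rintro (rfl | rfl | rfl | rfl)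
    · exact mu
    · exact mg2
    · exact mg3
    · exact mv

lemma key4 (ht : 1 ≤ t) {u v g2 g3 w1 w2 : SpreadMono (3 + 3 * t) 4 t}
    (hu : u.idx = ![1, 3 + t, 3 + 2 * t, 3 + 3 * t])
    (hv : v.idx = ![2, 2 + t, 3 + 2 * t, 3 + 3 * t])
    (hg2 : g2.idx = ![2, 2 + t, 2 + 2 * t, 2 + 3 * t])
    (hg3 : g3.idx = ![2, 2 + t, 2 + 2 * t, 3 + 3 * t])
    {xi : Fin (3 + 3 * t) →₀ ℕ}
    (hw1 : SpreadMono.slexGE w1 v) (hw2 : SpreadMono.slexGE u w2)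
    (d1 : w1.expVec ≤ xi) (d2 : w2.expVec ≤ xi) :
    ∃ w ∈ SpreadMono.lexseg u v, w.expVec ≤ xi := by
  obtain ⟨mu, mg2, mg3, mv⟩ := mem_lexseg4 ht hu hv hg2 hg3
  rcases classif_final ht hu hw2 with rfl | hp
  · exact ⟨w2, mu, d2⟩
  rcases classif_init ht hv hg2 hg3 hw1 with h0 | he | he | he
  · obtain ⟨f1, f2, f3, f4, f5⟩ := spread_facts w2
    obtain ⟨u0, u1, u2, u3⟩ := idx_vals hu
    obtain ⟨v0, v1, v2, v3⟩ := idx_vals hv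
    obtain ⟨a0, a1, a2, a3⟩ := idx_vals hg2
    obtain ⟨b0, b1, b2, b3⟩ := idx_vals hg3
    by_cases hq : w2.idx 1 ≤ 2 + t
    · have hr : w2.idx 2 = 2 + 2 * t ∨ w2.idx 2 = 3 + 2 * t := by omega
      rcases hr with hr | hr
      · have hs : w2.idx 3 = 2 + 3 * t ∨ w2.idx 3 = 3 + 3 * t := by omega
        rcases hs with hs | hs
        · have hw : w2 = g2 := SpreadMono.ext'
            (funeq4 (by omega) (by omega) (by omega) (by omega))
          exact ⟨g2, mg2, hw ▸ d2⟩
        · have hw : w2 = g3 := SpreadMono.ext'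
            (funeq4 (by omega) (by omega) (by omega) (by omega))
          exact ⟨g3, mg3, hw ▸ d2⟩
      · have hw : w2 = v := SpreadMono.ext'
          (funeq4 (by omega) (by omega) (by omega) (by omega))
        exact ⟨v, mv, hw ▸ d2⟩
    · -- here w2.idx = (p, 3+t, 3+2t, 3+3t); use u together with x1 from w1
      refine ⟨u, mu, SpreadMono.expVec_le_of ht u xi ?_⟩
      have hw10 := w1.one_le 0
      have k0 : u.var 0 = w1.var 0 := by
        apply Fin.ext; simp only [SpreadMono.var]; omega
      have k1 : u.var 1 = w2.var 1 := by
        apply Fin.ext; simp only [SpreadMono.var]; omega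
      have k2 : u.var 2 = w2.var 2 := by
        apply Fin.ext; simp only [SpreadMono.var]; omega
      have k3 : u.var 3 = w2.var 3 := by
        apply Fin.ext; simp only [SpreadMono.var]; omega
      intro j
      fin_cases j
      · show 1 ≤ xi (u.var 0); rw [k0]; exact SpreadMono.one_le_apply_var d1 0
      · show 1 ≤ xi (u.var 1); rw [k1]; exact SpreadMono.one_le_apply_var d2 1
      · show 1 ≤ xi (u.var 2); rw [k2]; exact SpreadMono.one_le_apply_var d2 2
      · show 1 ≤ xi (u.var 3); rw [k3]; exact SpreadMono.one_le_apply_var d2 3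
  · exact ⟨g2, mg2, by rw [← he]; exact d1⟩
  · exact ⟨g3, mg3, by rw [← he]; exact d1⟩
  · exact ⟨v, mv, by rw [← he]; exact d1⟩

end Aux

open SpreadMono

/-- **(Example).** Let `t ≥ 1` and, in `S = K[x_1,…,x_{3+3t}]`, let
`u = x_1x_{3+t}x_{3+2t}x_{3+3t}` and `v = x_2x_{2+t}x_{3+2t}x_{3+3t}`. Then the `t`-spread
lexsegment ideal `I = (L_t(u,v))` is generated by the four monomials
`x_1x_{3+t}x_{3+2t}x_{3+3t}, x_2x_{2+t}x_{2+2t}x_{2+3t}, x_2x_{2+t}x_{2+2t}x_{3+3t},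
x_2x_{2+t}x_{3+2t}x_{3+3t}`, and `I` is a completely `t`-spread lexsegment ideal,
i.e. `I = (L^i_t(v)) ∩ (L^f_t(u))`. -/
theorem stmt16 {K : Type*} [Field K] (t : ℕ) (ht : 1 ≤ t)
    (u v g2 g3 : SpreadMono (3 + 3 * t) 4 t)
    (hu : u.idx = ![1, 3 + t, 3 + 2 * t, 3 + 3 * t])
    (hv : v.idx = ![2, 2 + t, 3 + 2 * t, 3 + 3 * t])
    (hg2 : g2.idx = ![2, 2 + t, 2 + 2 * t, 2 + 3 * t])
    (hg3 : g3.idx = ![2, 2 + t, 2 + 2 * t, 3 + 3 * t]) :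
    idealOf K (lexseg u v) =
      Ideal.span {toMvPoly K u, toMvPoly K g2, toMvPoly K g3, toMvPoly K v} ∧
    idealOf K (lexseg u v) = idealOf K (initialSeg v) ⊓ idealOf K (finalSeg u) := by
  have hseg : lexseg u v = {u, g2, g3, v} := seg_eq4 ht hu hv hg2 hg3
  constructor
  · rw [idealOf, hseg]
    congr 1
    simp [Set.image_insert_eq]
  · apply le_antisymm
    · apply le_inf
      · exact Ideal.span_mono (Set.image_mono fun w hw => hw.2)
      · exact Ideal.span_mono (Set.image_mono fun w hw => hw.1)
    · intro p hp
      obtain ⟨h1, h2⟩ := Submodule.mem_inf.mp hp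
      have conv : ∀ A : Set (SpreadMono (3 + 3 * t) 4 t),
          idealOf K A =
            Ideal.span ((fun s => MvPolynomial.monomial s (1 : K)) '' (expVec '' A)) := by
        intro A
        rw [idealOf, Set.image_image]
        rfl
      rw [conv] at h1 h2 ⊢
      rw [MvPolynomial.mem_ideal_span_monomial_image] at h1 h2 ⊢
      intro xi hxi
      obtain ⟨s1, hs1, hle1⟩ := h1 xi hxi
      obtain ⟨w1, hw1, rfl⟩ := hs1
      obtain ⟨s2, hs2, hle2⟩ := h2 xi hxi
      obtain ⟨w2, hw2, rfl⟩ := hs2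
      obtain ⟨w, hw, hle⟩ := key4 ht hu hv hg2 hg3 hw1 hw2 hle1 hle2
      exact ⟨w.expVec, ⟨w, hw, rfl⟩, hle⟩
end
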